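/- Let G be a simple graph with n ≥ 2 vertices, m edges and Laplacian eigenvalues μ₁ ≥ … ≥ μ_{n−1} ≥ μₙ = 0. Then (2/(n−1)) · ( (n−1)(Zg(G) + 2m) − 4m² )^{1/2} ≤ S_L(G), where Zg(G) is the first Zagreb index of G. -/

import Mathlib

/-!
Drop the eigenvalue `μₙ = 0`: the remaining `n - 1` eigenvalues lie in `[μ_{n-1}, μ₁]`, and their
sum and sum of squares are the traces `2m` and `Zg(G) + 2m` of `L(G)` and `L(G)²`. Popoviciu's
inequality `N ∑ xᵢ² - (∑ xᵢ)² ≤ (N (b - a) / 2)²` for `N` numbers in `[a, b]` then gives the bound.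
-/

open Finset Polynomial

/-- `μ` is the (weakly decreasing) sequence of eigenvalues of the Laplacian matrix of `G`:
it is antitone and the characteristic polynomial of `L(G)` is `∏ i (x - μ i)`. -/
def IsLapEigSeq {n : ℕ} (G : SimpleGraph (Fin n)) [DecidableRel G.Adj]
    (μ : Fin n → ℝ) : Prop :=
  (∀ i j : Fin n, i ≤ j → μ j ≤ μ i) ∧
    (G.lapMatrix ℝ).charpoly = ∏ i : Fin n, (X - C (μ i))

theorem Finset.card_mul_sum_sq_sub_sq_sum_le {ι K : Type*} [Field K] [LinearOrder K]
    [IsStrictOrderedRing K] (s : Finset ι) (x : ι → K) {a b : K}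
    (ha : ∀ i ∈ s, a ≤ x i) (hb : ∀ i ∈ s, x i ≤ b) :
    #s * ∑ i ∈ s, x i ^ 2 - (∑ i ∈ s, x i) ^ 2 ≤ (#s * (b - a) / 2) ^ 2 := by
  have hprod : 0 ≤ ∑ i ∈ s, (b - x i) * (x i - a) :=
    sum_nonneg fun i hi => mul_nonneg (sub_nonneg.2 (hb i hi)) (sub_nonneg.2 (ha i hi))
  have hexpand : ∑ i ∈ s, (b - x i) * (x i - a)
      = (a + b) * ∑ i ∈ s, x i - ∑ i ∈ s, x i ^ 2 - #s * (a * b) := by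
    simp only [show ∀ i, (b - x i) * (x i - a) = (a + b) * x i - x i ^ 2 - a * b from
      fun i => by ring, sum_sub_distrib, ← mul_sum, sum_const, nsmul_eq_mul]
    ring
  -- the slack is `#s * ∑ (b - xᵢ) (xᵢ - a) + (#s * (a + b) - 2 * ∑ xᵢ) ^ 2 / 4`
  nlinarith [mul_nonneg (Nat.cast_nonneg (α := K) #s) hprod,
    sq_nonneg (#s * (a + b) - 2 * ∑ i ∈ s, x i)]

theorem Finset.two_div_card_mul_sqrt_le_sub {ι : Type*} {s : Finset ι} (hs : s.Nonempty)
    (x : ι → ℝ) {a b : ℝ} (ha : ∀ i ∈ s, a ≤ x i) (hb : ∀ i ∈ s, x i ≤ b) :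
    2 / #s * √(#s * ∑ i ∈ s, x i ^ 2 - (∑ i ∈ s, x i) ^ 2) ≤ b - a := by
  obtain ⟨j, hj⟩ := hs
  have hcard : (0 : ℝ) < #s := by exact_mod_cast card_pos.2 ⟨j, hj⟩
  have hsqrt : √(#s * ∑ i ∈ s, x i ^ 2 - (∑ i ∈ s, x i) ^ 2) ≤ #s * (b - a) / 2 :=
    Real.sqrt_le_iff.2 ⟨by nlinarith [ha j hj, hb j hj], s.card_mul_sum_sq_sub_sq_sum_le x ha hb⟩
  calc 2 / #s * √(#s * ∑ i ∈ s, x i ^ 2 - (∑ i ∈ s, x i) ^ 2)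
      ≤ 2 / #s * (#s * (b - a) / 2) := by gcongr
    _ = b - a := by field_simp

namespace Matrix.IsHermitian

variable {𝕜 n : Type*} [RCLike 𝕜] [Fintype n] [DecidableEq n] {A : Matrix n n 𝕜}

theorem trace_pow_eq_sum_eigenvalues_pow (hA : A.IsHermitian) (k : ℕ) :
    (A ^ k).trace = ∑ i, (hA.eigenvalues i : 𝕜) ^ k := by
  conv_lhs => rw [hA.spectral_theorem, ← map_pow, Unitary.conjStarAlgAut_apply, trace_mul_cycle,
    Unitary.coe_star_mul_self, one_mul, diagonal_pow, trace_diagonal]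
  simp

theorem map_eigenvalues_eq_of_charpoly_eq (hA : A.IsHermitian) {μ : n → ℝ}
    (hμ : A.charpoly = ∏ i, (X - C (μ i : 𝕜))) :
    univ.val.map hA.eigenvalues = univ.val.map μ := by
  have h := hA.roots_charpoly_eq_eigenvalues
  rw [hμ, roots_prod _ _ (prod_ne_zero_iff.mpr fun i _ => X_sub_C_ne_zero _)] at h
  simp only [roots_X_sub_C, Multiset.bind_singleton] at h
  exact Multiset.map_injective RCLike.ofReal_injective (by simpa [Function.comp_def] using h.symm)

end Matrix.IsHermitian

namespace SimpleGraph

variable {V : Type*} [Fintype V] [DecidableEq V] (G : SimpleGraph V) [DecidableRel G.Adj]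

theorem trace_lapMatrix (R : Type*) [CommRing R] :
    (G.lapMatrix R).trace = ∑ v, (G.degree v : R) := by
  rw [lapMatrix, Matrix.trace_sub, trace_adjMatrix, sub_zero, degMatrix, Matrix.trace_diagonal]

theorem trace_lapMatrix_sq (R : Type*) [CommRing R] :
    ((G.lapMatrix R) ^ 2).trace = ∑ v, (G.degree v : R) ^ 2 + ∑ v, (G.degree v : R) := by
  have hDA : (G.degMatrix R * G.adjMatrix R).trace = 0 := by
    simp only [Matrix.trace, Matrix.diag_apply, degMatrix, Matrix.diagonal_mul, adjMatrix_apply,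
      G.irrefl, if_false, mul_zero, sum_const_zero]
  have hAA : (G.adjMatrix R * G.adjMatrix R).trace = ∑ v, (G.degree v : R) := by
    simp only [Matrix.trace, Matrix.diag_apply, adjMatrix_mul_self_apply_self]
  rw [lapMatrix, sq, sub_mul, mul_sub, mul_sub, Matrix.trace_sub, Matrix.trace_sub,
    Matrix.trace_sub, Matrix.trace_mul_comm (G.adjMatrix R), hDA, degMatrix,
    Matrix.diagonal_mul_diagonal, Matrix.trace_diagonal, hAA]
  simp only [sq]
  ring

end SimpleGraph

namespace IsLapEigSeq

section

variable {n : ℕ} {G : SimpleGraph (Fin n)} [DecidableRel G.Adj] {μ : Fin n → ℝ}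

theorem map_eq_map_eigenvalues (hμ : IsLapEigSeq G μ) :
    univ.val.map μ = univ.val.map (G.isHermitian_lapMatrix ℝ).eigenvalues :=
  ((G.isHermitian_lapMatrix ℝ).map_eigenvalues_eq_of_charpoly_eq hμ.2).symm

theorem sum_pow (hμ : IsLapEigSeq G μ) (k : ℕ) :
    ∑ i, μ i ^ k = ((G.lapMatrix ℝ) ^ k).trace := by
  rw [(G.isHermitian_lapMatrix ℝ).trace_pow_eq_sum_eigenvalues_pow]
  calc ∑ i, μ i ^ k = ((univ.val.map μ).map (· ^ k)).sum := by rw [Multiset.map_map]; rfl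
    _ = ((univ.val.map (G.isHermitian_lapMatrix ℝ).eigenvalues).map (· ^ k)).sum := by
      rw [hμ.map_eq_map_eigenvalues]
    _ = _ := by rw [Multiset.map_map]; rfl

theorem nonneg (hμ : IsLapEigSeq G μ) (i : Fin n) : 0 ≤ μ i := by
  have hi : μ i ∈ univ.val.map (G.isHermitian_lapMatrix ℝ).eigenvalues :=
    hμ.map_eq_map_eigenvalues ▸ Multiset.mem_map_of_mem μ (mem_univ i)
  obtain ⟨j, -, hj⟩ := Multiset.mem_map.1 hi
  exact hj ▸ (G.posSemidef_lapMatrix ℝ).eigenvalues_nonneg j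

theorem exists_eq_zero [NeZero n] (hμ : IsLapEigSeq G μ) : ∃ i, μ i = 0 := by
  have hprod : ∏ i, μ i = 0 := by
    rw [prod_eq_multiset_prod, hμ.map_eq_map_eigenvalues, ← prod_eq_multiset_prod]
    simpa using ((G.isHermitian_lapMatrix ℝ).det_eq_prod_eigenvalues.symm.trans
      G.det_lapMatrix_eq_zero)
  obtain ⟨i, -, hi⟩ := prod_eq_zero_iff.1 hprod
  exact ⟨i, hi⟩

end

section

variable {k : ℕ} {G : SimpleGraph (Fin (k + 1))} [DecidableRel G.Adj] {μ : Fin (k + 1) → ℝ}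

theorem last_eq_zero (hμ : IsLapEigSeq G μ) : μ (Fin.last k) = 0 := by
  obtain ⟨i, hi⟩ := hμ.exists_eq_zero
  exact le_antisymm (hi ▸ hμ.1 i _ (Fin.le_last i)) (hμ.nonneg _)

theorem sum_castSucc_pow (hμ : IsLapEigSeq G μ) {p : ℕ} (hp : p ≠ 0) :
    ∑ i : Fin k, μ i.castSucc ^ p = ((G.lapMatrix ℝ) ^ p).trace := by
  rw [← hμ.sum_pow, Fin.sum_univ_castSucc, hμ.last_eq_zero, zero_pow hp, add_zero]

end

end IsLapEigSeq

/-- `(2/(n-1))·√((n-1)(Zg(G)+2m) - 4m²) ≤ S_L(G)`. -/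
theorem two_div_sqrt_bound_le_laplacianSpread
    {n : ℕ} (hn : 2 ≤ n) (G : SimpleGraph (Fin n)) [DecidableRel G.Adj]
    (m : ℕ) (hm : G.edgeFinset.card = m)
    (μ : Fin n → ℝ) (hμ : IsLapEigSeq G μ) :
    2 / ((n : ℝ) - 1) *
        Real.sqrt (((n : ℝ) - 1) * ((∑ v : Fin n, (G.degree v : ℝ) ^ 2) + 2 * (m : ℝ))
          - 4 * (m : ℝ) ^ 2)
      ≤ μ ⟨0, by omega⟩ - μ ⟨n - 2, by omega⟩ := by
  obtain ⟨k, rfl⟩ : ∃ k, n = k + 2 := ⟨n - 2, by omega⟩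
  have hdeg : ∑ v, (G.degree v : ℝ) = 2 * m := by
    exact_mod_cast hm ▸ G.sum_degrees_eq_twice_card_edges
  have hsum : ∑ i : Fin (k + 1), μ i.castSucc = 2 * m := by
    simpa [G.trace_lapMatrix, hdeg] using hμ.sum_castSucc_pow one_ne_zero
  have hsum_sq : ∑ i : Fin (k + 1), μ i.castSucc ^ 2 = ∑ v, (G.degree v : ℝ) ^ 2 + 2 * m := by
    rw [hμ.sum_castSucc_pow two_ne_zero, G.trace_lapMatrix_sq, hdeg]
  have h := univ.two_div_card_mul_sqrt_le_sub univ_nonempty (fun i : Fin (k + 1) => μ i.castSucc)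
    (a := μ ⟨k, by omega⟩) (b := μ 0)
    (fun i _ => hμ.1 _ _ (Fin.mk_le_mk.2 (by omega))) (fun i _ => hμ.1 _ _ (Fin.zero_le _))
  rw [card_univ, Fintype.card_fin, hsum, hsum_sq, mul_pow, show (2 : ℝ) ^ 2 = 4 by norm_num] at h
  have hn' : ((k + 2 : ℕ) : ℝ) - 1 = ((k + 1 : ℕ) : ℝ) := by push_cast; ring
  rw [hn']
  exact h
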